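/- For any positive integer N and any matrices B_1,…,B_N ∈ ℝ^{d×r} and A_1,…,A_N ∈ ℝ^{r×d}, the aggregation error satisfies ‖E‖_F ≤ (1/2) [ (1/(2N²)) ∑_{i,j=1}^N ‖B_i − B_j‖_F² + (1/(2N²)) ∑_{i,j=1}^N ‖A_i − A_j‖_F² ]. -/
import Mathlib


open scoped BigOperators

attribute [local instance] Matrix.frobeniusSeminormedAddCommGroup
  Matrix.frobeniusNormedAddCommGroup Matrix.frobeniusNormedSpace

/-- Frobenius norm of a real matrix. -/
noncomputable def frob {m n : Type*} [Fintype m] [Fintype n] (M : Matrix m n ℝ) : ℝ :=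
  Real.sqrt (∑ i, ∑ j, (M i j) ^ 2)

lemma frob_eq_norm {m n : Type*} [Fintype m] [Fintype n] (M : Matrix m n ℝ) :
    frob M = ‖M‖ := by
  rw [frob, Matrix.frobenius_norm_def, Real.sqrt_eq_rpow]
  congr 1
  refine Finset.sum_congr rfl fun i _ => Finset.sum_congr rfl fun j _ => ?_
  rw [Real.norm_eq_abs, show ((2:ℝ) = ((2:ℕ):ℝ)) by norm_num, Real.rpow_natCast, sq_abs]

lemma agg_identity (N d r : ℕ) (hN : 0 < N)
    (B : Fin N → Matrix (Fin d) (Fin r) ℝ) (A : Fin N → Matrix (Fin r) (Fin d) ℝ) :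
    ((N : ℝ)⁻¹ • ∑ i, B i) * ((N : ℝ)⁻¹ • ∑ i, A i) - (N : ℝ)⁻¹ • ∑ i, B i * A i
      = (-(1 / (2 * (N:ℝ)^2))) • ∑ i, ∑ j, (B i - B j) * (A i - A j) := by
  have h1 : ∀ i : Fin N, ∑ j, (B i - B j) * (A i - A j)
      = (N:ℝ) • (B i * A i) - B i * (∑ j, A j) - (∑ j, B j) * A i + ∑ j, B j * A j := by
    intro i
    have he : ∀ j : Fin N, (B i - B j) * (A i - A j)
        = B i * A i - B i * A j - B j * A i + B j * A j := fun j => by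
      simp only [Matrix.sub_mul, Matrix.mul_sub]; abel
    rw [Finset.sum_congr rfl fun j _ => he j]
    rw [Finset.sum_add_distrib, Finset.sum_sub_distrib, Finset.sum_sub_distrib,
      Finset.sum_const, Finset.card_univ, Fintype.card_fin, ← Nat.cast_smul_eq_nsmul ℝ,
      ← Matrix.mul_sum, ← Matrix.sum_mul]
  rw [Finset.sum_congr rfl fun i _ => h1 i]
  rw [Finset.sum_add_distrib, Finset.sum_sub_distrib, Finset.sum_sub_distrib,
    Finset.sum_const, Finset.card_univ, Fintype.card_fin, ← Nat.cast_smul_eq_nsmul ℝ,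
    ← Finset.smul_sum, ← Matrix.mul_sum, ← Matrix.sum_mul,
    Matrix.smul_mul, Matrix.mul_smul, smul_smul]
  have hN' : (N:ℝ) ≠ 0 := Nat.cast_ne_zero.mpr hN.ne'
  match_scalars <;> field_simp <;> ring

/-- AM–GM style bound on the aggregation error:
`‖E‖_F ≤ (1/2)[ (1/(2N²)) ∑ᵢⱼ ‖Bᵢ−Bⱼ‖_F² + (1/(2N²)) ∑ᵢⱼ ‖Aᵢ−Aⱼ‖_F² ]`. -/
theorem aggregation_error_amgm_bound (N d r : ℕ) (hN : 0 < N)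
    (B : Fin N → Matrix (Fin d) (Fin r) ℝ) (A : Fin N → Matrix (Fin r) (Fin d) ℝ) :
    frob (((N : ℝ)⁻¹ • ∑ i, B i) * ((N : ℝ)⁻¹ • ∑ i, A i) - (N : ℝ)⁻¹ • ∑ i, B i * A i)
      ≤ (1 / 2) * ((1 / (2 * (N : ℝ) ^ 2)) * ∑ i, ∑ j, frob (B i - B j) ^ 2
          + (1 / (2 * (N : ℝ) ^ 2)) * ∑ i, ∑ j, frob (A i - A j) ^ 2) := by
  have hN2 : (0:ℝ) < 2 * (N:ℝ)^2 := by positivity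
  rw [agg_identity N d r hN B A, frob_eq_norm, norm_smul, Real.norm_eq_abs, abs_neg,
    abs_of_pos (by positivity : (0:ℝ) < 1 / (2 * (N:ℝ)^2))]
  have hsum : ‖∑ i, ∑ j, (B i - B j) * (A i - A j)‖
      ≤ ∑ i, ∑ j, (frob (B i - B j) ^ 2 + frob (A i - A j) ^ 2) / 2 := by
    refine (norm_sum_le _ _).trans ?_
    refine Finset.sum_le_sum fun i _ => ?_
    refine (norm_sum_le _ _).trans ?_
    refine Finset.sum_le_sum fun j _ => ?_
    refine (Matrix.frobenius_norm_mul _ _).trans ?_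
    rw [← frob_eq_norm, ← frob_eq_norm]
    nlinarith [sq_nonneg (frob (B i - B j) - frob (A i - A j))]
  calc 1 / (2 * (N:ℝ)^2) * ‖∑ i, ∑ j, (B i - B j) * (A i - A j)‖
      ≤ 1 / (2 * (N:ℝ)^2) * ∑ i, ∑ j, (frob (B i - B j) ^ 2 + frob (A i - A j) ^ 2) / 2 := by
        exact mul_le_mul_of_nonneg_left hsum (by positivity)
    _ = (1 / 2) * ((1 / (2 * (N : ℝ) ^ 2)) * ∑ i, ∑ j, frob (B i - B j) ^ 2
          + (1 / (2 * (N : ℝ) ^ 2)) * ∑ i, ∑ j, frob (A i - A j) ^ 2) := by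
        simp only [add_div, Finset.sum_add_distrib, ← Finset.sum_div]
        ring
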